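/- (Lemma, policy improvement bound with state-distribution divergence) In the finite MDP setup, for any function f : S → ℝ and any two policies π and π', J(π') − J(π) ≥ (1/(1−γ)) ( L_{π,f}(π') − 2 ε_f^{π'} D_TV(d^{π'}||d^π) ), where D_TV(d^{π'}||d^π) = (1/2) Σ_s |d^{π'}(s) − d^π(s)|. Moreover, when π' = π both sides are identically zero. -/

import Mathlib

/-!
Because `P_π` is column-stochastic and `0 ≤ γ < 1`, the matrix `I - γ P_π` is strictly diagonally
dominant by columns, hence invertible, and `d^π` satisfies the flow equation
`γ P_π d^π = d^π - (1 - γ) μ`. Pairing it with `f` telescopes the potential terms of `δ_f`: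
`⟨d^π, E_π δ_f⟩ = (1 - γ) (J(π) - ⟨μ, f⟩)`. Subtracting this identity for `π` from the one for `π'`
gives `(1 - γ) (J(π') - J(π)) = L_{π,f}(π') + ⟨d^{π'} - d^π, E_{π'} δ_f⟩`, and the last pairing is
at least `-ε_f^{π'} Σ_s |d^{π'}(s) - d^π(s)|`.
-/

open Finset Matrix

noncomputable section

/-- The state-transition matrix of policy `π`: `(Pmat P π) s' s = Σ_a P(s'|s,a) π(a|s)`. -/
def Pmat {S A : Type*} [Fintype A] (P : S → A → S → ℝ) (π : S → A → ℝ) : Matrix S S ℝ :=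
  Matrix.of fun s' s => ∑ a, P s a s' * π s a

/-- The discounted future state distribution `d^π = (1-γ)(I - γ P_π)⁻¹ μ`. -/
def dpi {S A : Type*} [Fintype S] [Fintype A] [DecidableEq S]
    (γ : ℝ) (P : S → A → S → ℝ) (μ : S → ℝ) (π : S → A → ℝ) : S → ℝ :=
  (1 - γ) • ((1 - γ • Pmat P π)⁻¹).mulVec μ

/-- The expected discounted return `J(π)`. -/
def J {S A : Type*} [Fintype S] [Fintype A] [DecidableEq S]
    (γ : ℝ) (P : S → A → S → ℝ) (R : S → A → S → ℝ) (μ : S → ℝ) (π : S → A → ℝ) : ℝ :=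
  (1 / (1 - γ)) * ∑ s, dpi γ P μ π s * ∑ a, π s a * ∑ s', P s a s' * R s a s'

/-- The TD-error-like quantity `δ_f(s,a,s') = R(s,a,s') + γ f(s') - f(s)`. -/
def δf {S A : Type*} (γ : ℝ) (R : S → A → S → ℝ) (f : S → ℝ) (s : S) (a : A) (s' : S) : ℝ :=
  R s a s' + γ * f s' - f s

/-- The surrogate objective `L_{π,f}(π')`. -/
def Lsur {S A : Type*} [Fintype S] [Fintype A] [DecidableEq S]
    (γ : ℝ) (P : S → A → S → ℝ) (R : S → A → S → ℝ) (μ : S → ℝ) (f : S → ℝ)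
    (π π' : S → A → ℝ) : ℝ :=
  ∑ s, dpi γ P μ π s * ∑ a, (π' s a - π s a) * ∑ s', P s a s' * δf γ R f s a s'

/-- The maximal absolute expected shaped reward
`ε_f^{π'} = max_s |Σ_a π'(a|s) Σ_{s'} P(s'|s,a) δ_f(s,a,s')|`. -/
def epsf {S A : Type*} [Fintype S] [Fintype A] [Nonempty S]
    (γ : ℝ) (P : S → A → S → ℝ) (R : S → A → S → ℝ) (f : S → ℝ) (π' : S → A → ℝ) : ℝ :=
  Finset.univ.sup' Finset.univ_nonempty
    fun s => |∑ a, π' s a * ∑ s', P s a s' * δf γ R f s a s'|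

namespace Matrix

theorem isUnit_det_one_sub_smul_of_mem_colStochastic {n : Type*} [Fintype n] [DecidableEq n]
    {M : Matrix n n ℝ} (hM : M ∈ colStochastic ℝ n) {γ : ℝ} (hγ0 : 0 ≤ γ) (hγ1 : γ < 1) :
    IsUnit (1 - γ • M).det := by
  refine isUnit_iff_ne_zero.2 (det_ne_zero_of_sum_col_lt_diag fun k => ?_)
  have hoff : ∑ i ∈ univ.erase k, ‖(1 - γ • M) i k‖ = γ * (1 - M k k) := by
    rw [← sum_col_of_mem_colStochastic hM k, ← sum_erase_add _ _ (mem_univ k), add_sub_cancel_right,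
      mul_sum]
    refine sum_congr rfl fun i hi => ?_
    rw [sub_apply, one_apply_ne (ne_of_mem_erase hi), smul_apply, smul_eq_mul, zero_sub, norm_neg,
      Real.norm_of_nonneg (mul_nonneg hγ0 (nonneg_of_mem_colStochastic hM))]
  have hdiag : γ * M k k ≤ 1 :=
    mul_le_one₀ hγ1.le (nonneg_of_mem_colStochastic hM) (le_one_of_mem_colStochastic hM)
  rw [hoff, sub_apply, one_apply_eq, smul_apply, smul_eq_mul, Real.norm_of_nonneg (by linarith)]
  linarith

theorem abs_dotProduct_le {n : Type*} [Fintype n] {v w : n → ℝ} {ε : ℝ}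
    (hw : ∀ i, |w i| ≤ ε) : |v ⬝ᵥ w| ≤ ε * ∑ i, |v i| := by
  rw [mul_sum]
  refine (abs_sum_le_sum_abs _ _).trans (sum_le_sum fun i _ => ?_)
  rw [abs_mul, mul_comm ε]
  exact mul_le_mul_of_nonneg_left (hw i) (abs_nonneg _)

end Matrix

section

variable {S A : Type*} [Fintype S] [Fintype A]

theorem Pmat_mem_colStochastic [DecidableEq S] {P : S → A → S → ℝ}
    (hP0 : ∀ s a s', 0 ≤ P s a s') (hP1 : ∀ s a, ∑ s', P s a s' = 1)
    {π : S → A → ℝ} (hπ0 : ∀ s a, 0 ≤ π s a) (hπ1 : ∀ s, ∑ a, π s a = 1) :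
    Pmat P π ∈ colStochastic ℝ S := by
  refine mem_colStochastic_iff_sum.2
    ⟨fun s' s => sum_nonneg fun a _ => mul_nonneg (hP0 s a s') (hπ0 s a), fun s => ?_⟩
  simp only [Pmat, of_apply]
  rw [sum_comm]
  simp [← sum_mul, hP1, hπ1]

theorem smul_Pmat_mulVec_dpi [DecidableEq S] {γ : ℝ} {P : S → A → S → ℝ} (μ : S → ℝ)
    {π : S → A → ℝ} (hU : IsUnit (1 - γ • Pmat P π).det) :
    γ • (Pmat P π *ᵥ dpi γ P μ π) = dpi γ P μ π - (1 - γ) • μ := by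
  have hflow : (1 - γ • Pmat P π) *ᵥ dpi γ P μ π = (1 - γ) • μ := by
    rw [dpi, mulVec_smul, mulVec_mulVec, mul_nonsing_inv _ hU, one_mulVec]
  rw [sub_mulVec, one_mulVec, smul_mulVec] at hflow
  rw [← hflow, sub_sub_cancel]

def expectedReward (P R : S → A → S → ℝ) (π : S → A → ℝ) (s : S) : ℝ :=
  ∑ a, π s a * ∑ s', P s a s' * R s a s'

def expectedδf (γ : ℝ) (P R : S → A → S → ℝ) (f : S → ℝ) (π : S → A → ℝ) (s : S) : ℝ :=
  ∑ a, π s a * ∑ s', P s a s' * δf γ R f s a s'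

theorem expectedδf_eq {γ : ℝ} {P : S → A → S → ℝ} (hP1 : ∀ s a, ∑ s', P s a s' = 1)
    (R : S → A → S → ℝ) (f : S → ℝ) {π : S → A → ℝ} (hπ1 : ∀ s, ∑ a, π s a = 1) :
    expectedδf γ P R f π = expectedReward P R π + γ • ((Pmat P π)ᵀ *ᵥ f) - f := by
  ext s
  have hnext : ((Pmat P π)ᵀ *ᵥ f) s = ∑ a, π s a * ∑ s', P s a s' * f s' := by
    simp only [mulVec, dotProduct, transpose_apply, Pmat, of_apply, sum_mul, mul_sum]
    rw [sum_comm]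
    exact sum_congr rfl fun a _ => sum_congr rfl fun s' _ => by ring
  have hinner : ∀ a, ∑ s', P s a s' * δf γ R f s a s'
      = ∑ s', P s a s' * R s a s' + γ * ∑ s', P s a s' * f s' - f s := fun a => by
    simp only [δf, mul_add, mul_sub, sum_add_distrib, sum_sub_distrib, ← sum_mul, hP1, one_mul,
      mul_sum, mul_left_comm γ]
  simp only [Pi.sub_apply, Pi.add_apply, Pi.smul_apply, smul_eq_mul, hnext, expectedδf,
    expectedReward, hinner, mul_add, mul_sub, sum_add_distrib, sum_sub_distrib, ← sum_mul, hπ1,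
    one_mul, mul_sum, mul_left_comm γ]

theorem one_sub_mul_J [DecidableEq S] (γ : ℝ) (P R : S → A → S → ℝ) (μ : S → ℝ)
    (π : S → A → ℝ) :
    (1 - γ) * J γ P R μ π = dpi γ P μ π ⬝ᵥ expectedReward P R π := by
  rcases eq_or_ne γ 1 with rfl | hγ
  · simp [dpi]
  · rw [_root_.J, ← mul_assoc, mul_one_div_cancel (sub_ne_zero.2 hγ.symm), one_mul]
    rfl

theorem dpi_dotProduct_expectedδf [DecidableEq S] {γ : ℝ} {P : S → A → S → ℝ}
    (hP1 : ∀ s a, ∑ s', P s a s' = 1) (R : S → A → S → ℝ) (μ f : S → ℝ) {π : S → A → ℝ}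
    (hπ1 : ∀ s, ∑ a, π s a = 1) (hU : IsUnit (1 - γ • Pmat P π).det) :
    dpi γ P μ π ⬝ᵥ expectedδf γ P R f π = (1 - γ) * J γ P R μ π - (1 - γ) * (μ ⬝ᵥ f) := by
  rw [expectedδf_eq hP1 R f hπ1, dotProduct_sub, dotProduct_add, dotProduct_smul,
    dotProduct_mulVec, vecMul_transpose, ← smul_dotProduct, smul_Pmat_mulVec_dpi μ hU,
    sub_dotProduct, smul_dotProduct, ← one_sub_mul_J, smul_eq_mul]
  ring

theorem Lsur_eq [DecidableEq S] (γ : ℝ) (P R : S → A → S → ℝ) (μ f : S → ℝ)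
    (π π' : S → A → ℝ) :
    Lsur γ P R μ f π π' =
      dpi γ P μ π ⬝ᵥ expectedδf γ P R f π' - dpi γ P μ π ⬝ᵥ expectedδf γ P R f π := by
  simp only [Lsur, expectedδf, dotProduct, ← sum_sub_distrib, ← mul_sub, sub_mul]

theorem abs_expectedδf_le_epsf [Nonempty S] (γ : ℝ) (P R : S → A → S → ℝ) (f : S → ℝ)
    (π : S → A → ℝ) (s : S) : |expectedδf γ P R f π s| ≤ epsf γ P R f π :=
  le_sup' (fun s => |expectedδf γ P R f π s|) (mem_univ s)

theorem one_sub_mul_J_sub_J [DecidableEq S] {γ : ℝ} {P : S → A → S → ℝ}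
    (hP1 : ∀ s a, ∑ s', P s a s' = 1) (R : S → A → S → ℝ) (μ f : S → ℝ) {π π' : S → A → ℝ}
    (hπ1 : ∀ s, ∑ a, π s a = 1) (hπ'1 : ∀ s, ∑ a, π' s a = 1)
    (hU : IsUnit (1 - γ • Pmat P π).det) (hU' : IsUnit (1 - γ • Pmat P π').det) :
    (1 - γ) * (J γ P R μ π' - J γ P R μ π) =
      Lsur γ P R μ f π π' + (dpi γ P μ π' - dpi γ P μ π) ⬝ᵥ expectedδf γ P R f π' := by
  rw [Lsur_eq, sub_dotProduct, dpi_dotProduct_expectedδf hP1 R μ f hπ'1 hU',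
    dpi_dotProduct_expectedδf hP1 R μ f hπ1 hU]
  ring

end

theorem stmt_10_general {S A : Type*} [Fintype S] [Fintype A] [Nonempty S] [DecidableEq S]
    (γ : ℝ) (hγ0 : 0 ≤ γ) (hγ1 : γ < 1)
    (P : S → A → S → ℝ) (hP0 : ∀ s a s', 0 ≤ P s a s') (hP1 : ∀ s a, ∑ s', P s a s' = 1)
    (R : S → A → S → ℝ)
    (μ : S → ℝ)
    (π π' : S → A → ℝ)
    (hπ0 : ∀ s a, 0 ≤ π s a) (hπ1 : ∀ s, ∑ a, π s a = 1)
    (hπ'0 : ∀ s a, 0 ≤ π' s a) (hπ'1 : ∀ s, ∑ a, π' s a = 1)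
    (f : S → ℝ) :
    (J γ P R μ π' - J γ P R μ π
        ≥ (1 / (1 - γ)) * (Lsur γ P R μ f π π'
            - 2 * epsf γ P R f π'
              * ((1 / 2) * ∑ s, |dpi γ P μ π' s - dpi γ P μ π s|)))
    ∧ (π' = π →
        J γ P R μ π' - J γ P R μ π = 0 ∧
          (1 / (1 - γ)) * (Lsur γ P R μ f π π'
            - 2 * epsf γ P R f π'
              * ((1 / 2) * ∑ s, |dpi γ P μ π' s - dpi γ P μ π s|)) = 0) := by
  have hU := isUnit_det_one_sub_smul_of_mem_colStochastic
    (Pmat_mem_colStochastic hP0 hP1 hπ0 hπ1) hγ0 hγ1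
  have hU' := isUnit_det_one_sub_smul_of_mem_colStochastic
    (Pmat_mem_colStochastic hP0 hP1 hπ'0 hπ'1) hγ0 hγ1
  have hJ : J γ P R μ π' - J γ P R μ π = (1 / (1 - γ)) *
      (Lsur γ P R μ f π π' + (dpi γ P μ π' - dpi γ P μ π) ⬝ᵥ expectedδf γ P R f π') := by
    rw [← one_sub_mul_J_sub_J hP1 R μ f hπ1 hπ'1 hU hU', ← mul_assoc,
      one_div_mul_cancel (by linarith), one_mul]
  have hshift := neg_abs_le ((dpi γ P μ π' - dpi γ P μ π) ⬝ᵥ expectedδf γ P R f π')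
  have hbound := abs_dotProduct_le (v := dpi γ P μ π' - dpi γ P μ π)
    (abs_expectedδf_le_epsf γ P R f π')
  refine ⟨?_, fun h => ?_⟩
  · rw [hJ, ge_iff_le]
    simp only [Pi.sub_apply] at hbound
    gcongr
    linarith
  · subst h
    simp [Lsur]

theorem stmt_10 {S A : Type*} [Fintype S] [Fintype A] [Nonempty S] [Nonempty A] [DecidableEq S]
    (γ : ℝ) (hγ0 : 0 ≤ γ) (hγ1 : γ < 1)
    (P : S → A → S → ℝ) (hP0 : ∀ s a s', 0 ≤ P s a s') (hP1 : ∀ s a, ∑ s', P s a s' = 1)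
    (R : S → A → S → ℝ)
    (μ : S → ℝ) (hμ0 : ∀ s, 0 ≤ μ s) (hμ1 : ∑ s, μ s = 1)
    (π π' : S → A → ℝ)
    (hπ0 : ∀ s a, 0 ≤ π s a) (hπ1 : ∀ s, ∑ a, π s a = 1)
    (hπ'0 : ∀ s a, 0 ≤ π' s a) (hπ'1 : ∀ s, ∑ a, π' s a = 1)
    (f : S → ℝ) :
    (J γ P R μ π' - J γ P R μ π
        ≥ (1 / (1 - γ)) * (Lsur γ P R μ f π π'
            - 2 * epsf γ P R f π'
              * ((1 / 2) * ∑ s, |dpi γ P μ π' s - dpi γ P μ π s|)))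
    ∧ (π' = π →
        J γ P R μ π' - J γ P R μ π = 0 ∧
          (1 / (1 - γ)) * (Lsur γ P R μ f π π'
            - 2 * epsf γ P R f π'
              * ((1 / 2) * ∑ s, |dpi γ P μ π' s - dpi γ P μ π s|)) = 0) :=
  stmt_10_general γ hγ0 hγ1 P hP0 hP1 R μ π π' hπ0 hπ1 hπ'0 hπ'1 f
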